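/- Let V be a ℤ₂×ℤ₂-graded vector space over a field k of characteristic ≠ 2 with a bracket [·,·] of bi-degree (0,0), and let [a,b]_s := (−1)^(γ₁·δ₂)[a,b] be the twisted bracket for a ∈ G γ, b ∈ G δ. Then [·,·] satisfies bi-graded antisymmetry ([a,b] = −(−1)^⟨γ,δ⟩[b,a] for all homogeneous a,b) if and only if [·,·]_s satisfies super antisymmetry with respect to total parity ([a,b]_s = −(−1)^(p(a)p(b))[b,a]_s for all homogeneous a,b). -/

import Mathlib

/-! Both conditions are pointwise in `(γ, δ, a, b)`. Multiplying the bi-graded condition by the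
unit `(−1)^(γ₁δ₂)` gives the super one, because in `ZMod 2`
`(γ₁+γ₂)(δ₁+δ₂) + δ₁γ₂ = γ₁δ₂ + ⟨γ,δ⟩`, the cross terms `γ₂δ₁` cancelling in pairs. -/

/-- The sign `(−1)^⟨γ,δ⟩` where `⟨γ,δ⟩ = γ₁δ₁ + γ₂δ₂ ∈ ZMod 2`. -/
def biSign (k : Type*) [Field k] (γ δ : ZMod 2 × ZMod 2) : k :=
  (-1 : k) ^ (γ.1 * δ.1 + γ.2 * δ.2).val

/-- The super sign `(−1)^(p(γ)p(δ))` built from the total parities `p(γ)=γ₁+γ₂`. -/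
def parSign (k : Type*) [Field k] (γ δ : ZMod 2 × ZMod 2) : k :=
  (-1 : k) ^ ((γ.1 + γ.2) * (δ.1 + δ.2)).val

/-- The twisted bracket `[a,b]ₛ = (−1)^(γ₁δ₂) [a,b]` on elements of bi-degrees `γ, δ`. -/
def twBr {k V : Type*} [Field k] [AddCommGroup V] [Module k V]
    (br : V →ₗ[k] V →ₗ[k] V) (γ δ : ZMod 2 × ZMod 2) (a b : V) : V :=
  ((-1 : k) ^ (γ.1 * δ.2).val) • br a b

lemma ZMod.neg_one_pow_val_add {R : Type*} [Ring R] (x y : ZMod 2) :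
    (-1 : R) ^ (x + y).val = (-1) ^ x.val * (-1) ^ y.val := by
  rw [ZMod.val_add, ← neg_one_pow_eq_pow_mod_two, pow_add]

lemma parSign_mul_neg_one_pow {k : Type*} [Field k] (γ δ : ZMod 2 × ZMod 2) :
    parSign k γ δ * (-1) ^ (δ.1 * γ.2).val = (-1) ^ (γ.1 * δ.2).val * biSign k γ δ := by
  have two_eq_zero : (2 : ZMod 2) = 0 := rfl
  have h : (γ.1 + γ.2) * (δ.1 + δ.2) + δ.1 * γ.2 = γ.1 * δ.2 + (γ.1 * δ.1 + γ.2 * δ.2) := by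
    linear_combination δ.1 * γ.2 * two_eq_zero
  rw [parSign, biSign, ← ZMod.neg_one_pow_val_add, ← ZMod.neg_one_pow_val_add, h]

lemma twBr_eq_neg_parSign_smul_iff {k V : Type*} [Field k] [AddCommGroup V] [Module k V]
    (br : V →ₗ[k] V →ₗ[k] V) (γ δ : ZMod 2 × ZMod 2) (a b : V) :
    twBr br γ δ a b = -(parSign k γ δ • twBr br δ γ b a) ↔
      br a b = -(biSign k γ δ • br b a) := by
  have hsign : (-1 : k) ^ (γ.1 * δ.2).val ≠ 0 := pow_ne_zero _ (neg_ne_zero.mpr one_ne_zero)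
  rw [twBr, twBr, smul_smul, parSign_mul_neg_one_pow, ← smul_smul, ← smul_neg, smul_right_inj hsign]

theorem bigraded_antisymm_iff_super_antisymm_general {k V : Type*} [Field k]
    [AddCommGroup V] [Module k V]
    (G : ZMod 2 × ZMod 2 → Submodule k V)
    (br : V →ₗ[k] V →ₗ[k] V) :
    (∀ (γ δ : ZMod 2 × ZMod 2), ∀ a ∈ G γ, ∀ b ∈ G δ,
        br a b = -(biSign k γ δ • br b a)) ↔
    (∀ (γ δ : ZMod 2 × ZMod 2), ∀ a ∈ G γ, ∀ b ∈ G δ,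
        twBr br γ δ a b = -(parSign k γ δ • twBr br δ γ b a)) := by
  simp only [twBr_eq_neg_parSign_smul_iff]

/-- A bracket of bi-degree `(0,0)` is bi-graded antisymmetric iff its twisted
bracket is super antisymmetric with respect to total parity. -/
theorem bigraded_antisymm_iff_super_antisymm {k V : Type*} [Field k]
    [AddCommGroup V] [Module k V]
    (hchar : (2 : k) ≠ 0)
    (G : ZMod 2 × ZMod 2 → Submodule k V)
    (hG : DirectSum.IsInternal G)
    (br : V →ₗ[k] V →ₗ[k] V)
    (hdeg : ∀ (γ δ : ZMod 2 × ZMod 2), ∀ a ∈ G γ, ∀ b ∈ G δ, br a b ∈ G (γ + δ)) :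
    (∀ (γ δ : ZMod 2 × ZMod 2), ∀ a ∈ G γ, ∀ b ∈ G δ,
        br a b = -(biSign k γ δ • br b a)) ↔
    (∀ (γ δ : ZMod 2 × ZMod 2), ∀ a ∈ G γ, ∀ b ∈ G δ,
        twBr br γ δ a b = -(parSign k γ δ • twBr br δ γ b a)) :=
  bigraded_antisymm_iff_super_antisymm_general G br
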